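/- Let A = [[2,3,2],[1,2,6],[1,1,2]] over ℂ. Then for every n ≥ 1, the sum of all entries of A^n equals (125/37)·6^n + (1/37)·(i^n·(−7+5i) − (−i)^n·(7+5i)). In particular this quantity is a positive integer for all n ≥ 1. -/
import Mathlib

open Complex

private def Bz : Matrix (Fin 3) (Fin 3) ℤ := !![2, 3, 2; 1, 2, 6; 1, 1, 2]

private lemma Bz_pos : ∀ n, ∀ i j, 1 ≤ (Bz ^ (n + 1)) i j := by
  intro n
  induction n with
  | zero => intro i j; fin_cases i <;> fin_cases j <;> norm_num [Bz, Matrix.vecHead, Matrix.vecTail]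
  | succ m ih =>
    intro i j
    have h : Bz ^ (m + 2) = Bz ^ (m + 1) * Bz := by rw [pow_succ]
    rw [h, Matrix.mul_apply, Fin.sum_univ_three]
    have h0 := ih i 0
    have h1 := ih i 1
    have h2 := ih i 2
    simp only [Bz] at h0 h1 h2
    fin_cases j <;> simp [Bz, Matrix.vecHead, Matrix.vecTail] <;> nlinarith

private lemma pow_map (n : ℕ) :
    ((!![2, 3, 2; 1, 2, 6; 1, 1, 2] : Matrix (Fin 3) (Fin 3) ℂ)) ^ n
      = (Bz ^ n).map (Int.cast : ℤ → ℂ) := by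
  have hA : (!![2, 3, 2; 1, 2, 6; 1, 1, 2] : Matrix (Fin 3) (Fin 3) ℂ)
      = (Int.castRingHom ℂ).mapMatrix Bz := by
    ext i j
    fin_cases i <;> fin_cases j <;> simp [Bz, Matrix.vecHead, Matrix.vecTail]
  rw [hA, ← map_pow]
  rfl

private lemma hCHz : Bz ^ 3 + Bz = (6 : ℤ) • Bz ^ 2 + (6 : ℤ) • 1 := by
  have h1 : ((6 : ℤ) • (1 : Matrix (Fin 3) (Fin 3) ℤ)) = !![6,0,0;0,6,0;0,0,6] := by
    ext i j
    fin_cases i <;> fin_cases j <;>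
      simp [Matrix.smul_apply, Matrix.one_apply, Matrix.vecHead, Matrix.vecTail]
  rw [h1]
  ext i j
  fin_cases i <;> fin_cases j <;>
    simp [Bz, pow_succ, Matrix.mul_apply, Fin.sum_univ_three, Matrix.smul_apply,
      Matrix.vecHead, Matrix.vecTail] <;> norm_num

private def t (n : ℕ) : ℤ := ∑ i, ∑ j, (Bz ^ n) i j

private lemma t_rec (n : ℕ) : t (n + 3) + t (n + 1) = 6 * t (n + 2) + 6 * t n := by
  have h : Bz ^ (n + 3) + Bz ^ (n + 1) = (6 : ℤ) • Bz ^ (n + 2) + (6 : ℤ) • Bz ^ n := by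
    calc Bz ^ (n + 3) + Bz ^ (n + 1) = Bz ^ n * (Bz ^ 3 + Bz) := by
          rw [mul_add, ← pow_add, ← pow_succ]
      _ = Bz ^ n * ((6 : ℤ) • Bz ^ 2 + (6 : ℤ) • 1) := by rw [hCHz]
      _ = (6 : ℤ) • Bz ^ (n + 2) + (6 : ℤ) • Bz ^ n := by
          rw [mul_add, mul_smul_comm, mul_smul_comm, ← pow_add, mul_one]
  have h2 := congrArg (fun M : Matrix (Fin 3) (Fin 3) ℤ => ∑ i, ∑ j, M i j) h
  simp only [Matrix.add_apply, Matrix.smul_apply, smul_eq_mul, Finset.sum_add_distrib,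
    ← Finset.mul_sum] at h2
  simpa [t] using h2

private lemma t_pos (n : ℕ) : 0 < t (n + 1) := by
  have : (0 : ℤ) < ∑ i : Fin 3, ∑ j : Fin 3, (Bz ^ (n + 1)) i j := by
    have hrow : ∀ i : Fin 3, (0 : ℤ) < ∑ j : Fin 3, (Bz ^ (n + 1)) i j := by
      intro i
      exact Finset.sum_pos (fun j _ => lt_of_lt_of_le one_pos (Bz_pos n i j))
        ⟨0, Finset.mem_univ 0⟩
    exact Finset.sum_pos (fun i _ => hrow i) ⟨0, Finset.mem_univ 0⟩
  simpa [t] using this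

private lemma sum_eq_t (n : ℕ) :
    ∑ i, ∑ j, ((!![2, 3, 2; 1, 2, 6; 1, 1, 2] : Matrix (Fin 3) (Fin 3) ℂ) ^ n) i j
      = (t n : ℂ) := by
  rw [pow_map]
  simp [t, Matrix.map_apply]

private noncomputable def f (n : ℕ) : ℂ :=
  (125 / 37) * 6 ^ n + (1 / 37) * (I ^ n * (-7 + 5 * I) - (-I) ^ n * (7 + 5 * I))

private lemma f_rec (n : ℕ) : f (n + 3) + f (n + 1) = 6 * f (n + 2) + 6 * f n := by
  have hI : (I : ℂ) ^ 2 = -1 := Complex.I_sq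
  simp only [f, pow_add]
  linear_combination ((1 / 37 : ℂ) * (I ^ n * (-7 + 5 * I) * (I - 6)
    - (-I) ^ n * (7 + 5 * I) * (-I - 6))) * hI

private lemma tf1 : ((t 1 : ℤ) : ℂ) = f 1 := by
  have h1 : t 1 = 20 := by decide
  have hI : (I : ℂ) ^ 2 = -1 := Complex.I_sq
  rw [h1]; simp only [f]; push_cast; field_simp; linear_combination (-10 : ℂ) * hI

private lemma tf2 : ((t 2 : ℤ) : ℂ) = f 2 := by
  have h2 : t 2 = 122 := by decide
  have hI : (I : ℂ) ^ 2 = -1 := Complex.I_sq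
  rw [h2]; simp only [f, neg_pow, hI, pow_succ, pow_zero]
  push_cast; ring_nf
  linear_combination (5 / 37 * I + 7 / 37) * hI

private lemma tf3 : ((t 3 : ℤ) : ℂ) = f 3 := by
  have h3 : t 3 = 730 := by decide
  have hI : (I : ℂ) ^ 2 = -1 := Complex.I_sq
  rw [h3]; simp only [f]; push_cast; field_simp; linear_combination (10 - 10 * I ^ 2) * hI

private lemma t_eq_f : ∀ n : ℕ, ((t (n + 1) : ℤ) : ℂ) = f (n + 1) := by
  have key : ∀ n : ℕ, ((t (n + 1) : ℤ) : ℂ) = f (n + 1) ∧ ((t (n + 2) : ℤ) : ℂ) = f (n + 2)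
      ∧ ((t (n + 3) : ℤ) : ℂ) = f (n + 3) := by
    intro n
    induction n with
    | zero => exact ⟨tf1, tf2, tf3⟩
    | succ m ih =>
      obtain ⟨e1, e2, e3⟩ := ih
      refine ⟨e2, e3, ?_⟩
      have hr := t_rec (m + 1)
      have hrc := congrArg (fun z : ℤ => (z : ℂ)) hr
      push_cast at hrc
      have hf := f_rec (m + 1)
      simp only [show m + 1 + 3 = m + 4 from by omega, show m + 1 + 2 = m + 3 from by omega,
        show m + 1 + 1 = m + 2 from by omega] at hrc hf ⊢
      linear_combination hrc + 6 * e3 + 6 * e1 - e2 - hf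
  exact fun n => (key n).1

open Complex in
theorem stmt_16 :
    ∀ n : ℕ, 1 ≤ n →
      (∑ i, ∑ j, ((!![2, 3, 2; 1, 2, 6; 1, 1, 2] : Matrix (Fin 3) (Fin 3) ℂ) ^ n) i j
          = (125 / 37) * 6 ^ n + (1 / 37) * (I ^ n * (-7 + 5 * I) - (-I) ^ n * (7 + 5 * I))) ∧
      ∃ k : ℤ, 0 < k ∧
        ∑ i, ∑ j, ((!![2, 3, 2; 1, 2, 6; 1, 1, 2] : Matrix (Fin 3) (Fin 3) ℂ) ^ n) i j
          = (k : ℂ) := by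
  intro n hn
  obtain ⟨m, rfl⟩ := Nat.exists_eq_add_of_le hn
  constructor
  · rw [show 1 + m = m + 1 by omega, sum_eq_t]
    exact t_eq_f m
  · exact ⟨t (1 + m), by rw [show 1 + m = m + 1 by omega]; exact t_pos m, sum_eq_t (1 + m)⟩
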